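/- The Cramér (Legendre) transform of a chi-square distribution with one degree of freedom equals Λ*(x) = (1/2)(x - 1 - log x) for x > 0 and Λ*(x) = +∞ for x ≤ 0, where Λ*(x) = sup_{θ < 1/2} (θx + (1/2)log(1-2θ)). -/
import Mathlib


open Real

/-- The Cramér (Legendre) transform of a chi-square distribution with one degree of
freedom, `Λ*(x) = sup_{θ < 1/2} (θx + (1/2)log(1-2θ))`, equals `(1/2)(x - 1 - log x)`
for `x > 0` and `+∞` for `x ≤ 0`. -/
theorem cramer_transform_chiSquare_one :
    (∀ x : ℝ, 0 < x →
      (⨆ θ : {θ : ℝ // θ < 1/2}, ((θ.1 * x + (1/2) * Real.log (1 - 2 * θ.1) : ℝ) : EReal))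
        = ((1/2 * (x - 1 - Real.log x) : ℝ) : EReal)) ∧
    (∀ x : ℝ, x ≤ 0 →
      (⨆ θ : {θ : ℝ // θ < 1/2}, ((θ.1 * x + (1/2) * Real.log (1 - 2 * θ.1) : ℝ) : EReal))
        = ⊤) := by
  constructor
  · intro x hx
    apply le_antisymm
    · apply iSup_le
      rintro ⟨θ, hθ⟩
      rw [EReal.coe_le_coe_iff]
      have hpos : 0 < 1 - 2 * θ := by linarith
      have h1 : Real.log ((1 - 2 * θ) * x) ≤ (1 - 2 * θ) * x - 1 :=
        Real.log_le_sub_one_of_pos (by positivity)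
      rw [Real.log_mul (ne_of_gt hpos) (ne_of_gt hx)] at h1
      nlinarith
    · have hθ : (1 - 1 / x) / 2 < 1 / 2 := by
        have : 0 < 1 / x := by positivity
        linarith
      have hle := le_iSup
        (fun θ : {θ : ℝ // θ < 1/2} =>
          ((θ.1 * x + (1/2) * Real.log (1 - 2 * θ.1) : ℝ) : EReal))
        ⟨(1 - 1 / x) / 2, hθ⟩
      refine le_trans (le_of_eq ?_) hle
      have h2 : 1 - 2 * ((1 - 1 / x) / 2) = 1 / x := by ring
      rw [h2, Real.log_div one_ne_zero (ne_of_gt hx), Real.log_one]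
      have hx' : x ≠ 0 := ne_of_gt hx
      norm_cast
      field_simp
      ring
  · intro x hx
    rw [iSup_eq_top]
    intro b hb
    induction b using EReal.rec with
    | bot =>
      exact ⟨⟨0, by norm_num⟩, EReal.bot_lt_coe _⟩
    | coe m =>
      have hθ : -(Real.exp (2 * m)) / 2 < 1 / 2 := by
        have := Real.exp_pos (2 * m); linarith
      refine ⟨⟨-(Real.exp (2 * m)) / 2, hθ⟩, ?_⟩
      rw [EReal.coe_lt_coe_iff]
      have h1 : 1 - 2 * (-(Real.exp (2 * m)) / 2) = 1 + Real.exp (2 * m) := by ring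
      rw [h1]
      have h2 : 2 * m = Real.log (Real.exp (2 * m)) := (Real.log_exp _).symm
      have h3 : Real.log (Real.exp (2 * m)) < Real.log (1 + Real.exp (2 * m)) := by
        apply Real.log_lt_log (Real.exp_pos _)
        linarith
      have h4 : 0 ≤ -(Real.exp (2 * m)) / 2 * x := by
        have := Real.exp_pos (2 * m)
        nlinarith
      nlinarith
    | top => exact absurd hb (lt_irrefl _)
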